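/- arXiv:1802.07083 — 2 statements merged into one kernel-verified Lean document; each statement's English description precedes it below -/
import Mathlib

section
/- Let ω ∈ ℝⁿ be nonzero and let σ ⊆ ℝⁿ be a strongly convex polyhedral cone contained in the half-space {u | ω·u ≥ 0}. Then there exists a continuous total order ⪯ on ℝⁿ (an order of the form ≤_{(u₁,…,u_s)} given by lexicographic comparison of dot products with vectors u₁,…,u_s) that refines ≤_ω and such that σ is ⪯-nonnegative. -/
/-!
Strong convexity of `σ` means that `0` is not in the convex hull of the nonzero generators, so
Hahn–Banach yields a vector `v` with `v · x > 0` on `σ \ {0}`. The order `≤_{(ω, v, e₁, …, eₙ)}`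
then works: `ω` comes first, so it refines `≤_ω`; on `σ`, ties in `ω` are broken by `v` in
favour of `0`; and the standard basis vectors make it antisymmetric.
-/

open Matrix

/-- The polyhedral cone generated by vectors `u 0, …, u (k-1)` in `ℝⁿ`. -/
def polyCone {n k : ℕ} (u : Fin k → (Fin n → ℝ)) : Set (Fin n → ℝ) :=
  {x | ∃ lam : Fin k → ℝ, (∀ i, 0 ≤ lam i) ∧ x = ∑ i, lam i • u i}

/-- The continuous preorder `≤_{(w₁,…,w_s)}`: compare the tuples of dot products with
`w₁,…,w_s` lexicographically. -/
def lexLe {n s : ℕ} (w : Fin s → Fin n → ℝ) (a b : Fin n → ℝ) : Prop :=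
  (∀ i, a ⬝ᵥ w i = b ⬝ᵥ w i) ∨
  ∃ i, (∀ j, j < i → a ⬝ᵥ w j = b ⬝ᵥ w j) ∧ a ⬝ᵥ w i < b ⬝ᵥ w i

namespace PointedCone

variable {𝕜 E : Type*} [Field 𝕜] [LinearOrder 𝕜] [IsStrictOrderedRing 𝕜] [AddCommGroup E]
  [Module 𝕜 E] {C : PointedCone 𝕜 E}

lemma eq_zero_of_sum_eq_zero (hC : ∀ x ∈ C, -x ∈ C → x = 0) {ι : Type*} {s : Finset ι}
    {x : ι → E} (hx : ∀ i ∈ s, x i ∈ C) (hsum : ∑ i ∈ s, x i = 0) {i : ι} (hi : i ∈ s) :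
    x i = 0 := by
  classical
  refine hC _ (hx i hi) ?_
  rw [← Finset.add_sum_erase s x hi, add_eq_zero_iff_neg_eq] at hsum
  exact hsum ▸ C.sum_mem fun j hj => hx j (Finset.mem_of_mem_erase hj)

lemma zero_notMem_convexHull (hC : ∀ x ∈ C, -x ∈ C → x = 0) {S : Set E} (hSC : S ⊆ C)
    (hS : (0 : E) ∉ S) : (0 : E) ∉ convexHull 𝕜 S := by
  intro h0
  obtain ⟨ι, _, μ, z, hμ, hμ1, hz, hsum⟩ := mem_convexHull_iff_exists_fintype.1 h0
  obtain ⟨t, -, ht⟩ := Finset.exists_ne_zero_of_sum_ne_zero (hμ1 ▸ one_ne_zero)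
  have := eq_zero_of_sum_eq_zero hC
    (fun t _ => C.smul_mem (hμ t) (hSC (hz t))) hsum (Finset.mem_univ t)
  exact (smul_eq_zero.1 this).elim ht fun h => hS (h ▸ hz t)

end PointedCone

lemma exists_strongDual_pos_of_zero_notMem_convexHull {E : Type*} [AddCommGroup E] [Module ℝ E]
    [TopologicalSpace E] [IsTopologicalAddGroup E] [ContinuousSMul ℝ E] [LocallyConvexSpace ℝ E]
    [T2Space E] {S : Set E} (hS : S.Finite) (h0 : (0 : E) ∉ convexHull ℝ S) :
    ∃ f : StrongDual ℝ E, ∀ x ∈ S, 0 < f x := by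
  obtain ⟨f, c, hf0, hf⟩ :=
    geometric_hahn_banach_point_closed (convex_convexHull ℝ S) (hS.isClosed_convexHull ℝ) h0
  exact ⟨f, fun x hx => (map_zero f ▸ hf0).trans (hf x (subset_convexHull ℝ S hx))⟩

lemma LinearMap.exists_eq_dotProduct {n : ℕ} (f : (Fin n → ℝ) →ₗ[ℝ] ℝ) :
    ∃ v : Fin n → ℝ, ∀ x, f x = v ⬝ᵥ x :=
  ⟨fun i => f fun j => if i = j then 1 else 0, fun x => by
    simp [f.pi_apply_eq_sum_univ x, dotProduct, mul_comm]⟩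

lemma polyCone_eq_hull {n k : ℕ} (u : Fin k → Fin n → ℝ) :
    polyCone u = PointedCone.hull ℝ (Set.range u) := by
  ext x
  rw [SetLike.mem_coe, Submodule.mem_span_range_iff_exists_fun]
  constructor
  · rintro ⟨lam, hlam, rfl⟩
    exact ⟨fun i => ⟨lam i, hlam i⟩, rfl⟩
  · rintro ⟨c, rfl⟩
    exact ⟨fun i => c i, fun i => (c i).2, rfl⟩

lemma dotProduct_sum_smul_pos {n k : ℕ} {u : Fin k → Fin n → ℝ} {v : Fin n → ℝ}
    (hv : ∀ i, u i ≠ 0 → 0 < v ⬝ᵥ u i) {lam : Fin k → ℝ} (hlam : ∀ i, 0 ≤ lam i)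
    (hx : ∑ i, lam i • u i ≠ 0) : 0 < v ⬝ᵥ ∑ i, lam i • u i := by
  obtain ⟨i, -, hi⟩ := Finset.exists_ne_zero_of_sum_ne_zero hx
  obtain ⟨hlam0, hu0⟩ := smul_ne_zero_iff.1 hi
  have hterm : ∀ j, 0 ≤ lam j * (v ⬝ᵥ u j) := by
    intro j
    rcases eq_or_ne (u j) 0 with h | h
    · simp [h]
    · exact mul_nonneg (hlam j) (hv j h).le
  simp only [dotProduct_sum, dotProduct_smul, smul_eq_mul]
  exact Finset.sum_pos' (fun j _ => hterm j)
    ⟨i, Finset.mem_univ i, mul_pos ((hlam i).lt_of_ne' hlam0) (hv i hu0)⟩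

lemma exists_dotProduct_pos_of_mem_polyCone {n k : ℕ} {u : Fin k → Fin n → ℝ}
    (hsc : ∀ x ∈ polyCone u, -x ∈ polyCone u → x = 0) :
    ∃ v : Fin n → ℝ, ∀ x ∈ polyCone u, x ≠ 0 → 0 < v ⬝ᵥ x := by
  rw [polyCone_eq_hull] at hsc
  have h0 : (0 : Fin n → ℝ) ∉ convexHull ℝ (Set.range u \ {0}) :=
    PointedCone.zero_notMem_convexHull hsc (Set.sdiff_subset.trans Submodule.subset_span)
      fun h => h.2 rfl
  obtain ⟨f, hf⟩ := exists_strongDual_pos_of_zero_notMem_convexHull (Set.finite_range u).sdiff h0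
  obtain ⟨v, hv⟩ := LinearMap.exists_eq_dotProduct f.toLinearMap
  refine ⟨v, ?_⟩
  rintro _ ⟨lam, hlam, rfl⟩ hx
  exact dotProduct_sum_smul_pos (fun i hi => hv (u i) ▸ hf _ ⟨⟨i, rfl⟩, hi⟩) hlam hx

section lexLe

variable {n s : ℕ}

lemma lexLe_refl (w : Fin s → Fin n → ℝ) (a : Fin n → ℝ) : lexLe w a a :=
  Or.inl fun _ => rfl

lemma lexLe_cons_iff (ω : Fin n → ℝ) (w : Fin s → Fin n → ℝ) (a b : Fin n → ℝ) :
    lexLe (Fin.cons ω w) a b ↔ a ⬝ᵥ ω < b ⬝ᵥ ω ∨ a ⬝ᵥ ω = b ⬝ᵥ ω ∧ lexLe w a b := by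
  simp only [lexLe, Fin.forall_fin_succ, Fin.cons_zero, Fin.cons_succ, Fin.exists_fin_succ,
    lt_self_iff_false, IsEmpty.forall_iff, not_lt_zero, implies_true, and_self, true_and,
    Fin.succ_pos, forall_const, Fin.succ_lt_succ_iff]
  grind

lemma dotProduct_eq_of_lexLe_of_lexLe {w : Fin s → Fin n → ℝ} {a b : Fin n → ℝ}
    (hab : lexLe w a b) (hba : lexLe w b a) (i : Fin s) : a ⬝ᵥ w i = b ⬝ᵥ w i := by
  rcases hab with h | ⟨p, hpre, hlt⟩
  · exact h i
  rcases hba with h | ⟨q, hpre', hlt'⟩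
  · exact (h i).symm
  rcases lt_trichotomy p q with hpq | rfl | hqp
  · exact absurd (hpre' p hpq) hlt.ne'
  · exact absurd hlt' hlt.not_gt
  · exact absurd (hpre q hqp) hlt'.ne'

lemma eq_of_lexLe_of_lexLe {w : Fin s → Fin n → ℝ} (hw : ∀ j, ∃ i, w i = Pi.single j 1)
    {a b : Fin n → ℝ} (hab : lexLe w a b) (hba : lexLe w b a) : a = b := by
  funext j
  obtain ⟨i, hi⟩ := hw j
  simpa [hi] using dotProduct_eq_of_lexLe_of_lexLe hab hba i

end lexLe

theorem exists_continuous_order_refining_general {n k : ℕ} (ω : Fin n → ℝ)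
    (u : Fin k → (Fin n → ℝ))
    (hsc : ∀ x ∈ polyCone u, -x ∈ polyCone u → x = 0)
    (hhalf : ∀ x ∈ polyCone u, 0 ≤ ω ⬝ᵥ x) :
    ∃ (s : ℕ) (w : Fin s → Fin n → ℝ),
      (∀ a b, lexLe w a b → lexLe w b a → a = b) ∧
      (∀ a b, lexLe w a b → ω ⬝ᵥ a ≤ ω ⬝ᵥ b) ∧
      (∀ x ∈ polyCone u, lexLe w 0 x) := by
  obtain ⟨v, hv⟩ := exists_dotProduct_pos_of_mem_polyCone hsc
  refine ⟨n + 2, Fin.cons ω (Fin.cons v fun j => Pi.single j 1), ?_, ?_, ?_⟩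
  · exact fun a b => eq_of_lexLe_of_lexLe fun j => ⟨j.succ.succ, rfl⟩
  · intro a b h
    rw [dotProduct_comm ω a, dotProduct_comm ω b]
    rcases (lexLe_cons_iff _ _ _ _).1 h with h | h
    exacts [h.le, h.1.le]
  · intro x hx
    rcases eq_or_ne x 0 with rfl | hx0
    · exact lexLe_refl _ _
    simp only [lexLe_cons_iff, zero_dotProduct, dotProduct_comm x]
    rcases (hhalf x hx).lt_or_eq with hωx | hωx
    exacts [Or.inl hωx, Or.inr ⟨hωx, Or.inl (hv x hx hx0)⟩]

/-- Given `ω ≠ 0` and a strongly convex polyhedral cone `σ` contained in the half-space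
`{u | ω·u ≥ 0}`, there is a continuous total order (of the form `≤_{(w₁,…,w_s)}`)
refining `≤_ω` for which `σ` is nonnegative. -/
theorem exists_continuous_order_refining {n k : ℕ} (ω : Fin n → ℝ) (hω : ω ≠ 0)
    (u : Fin k → (Fin n → ℝ))
    (hsc : ∀ x ∈ polyCone u, -x ∈ polyCone u → x = 0)
    (hhalf : ∀ x ∈ polyCone u, 0 ≤ ω ⬝ᵥ x) :
    ∃ (s : ℕ) (w : Fin s → Fin n → ℝ),
      (∀ a b, lexLe w a b → lexLe w b a → a = b) ∧
      (∀ a b, lexLe w a b → ω ⬝ᵥ a ≤ ω ⬝ᵥ b) ∧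
      (∀ x ∈ polyCone u, lexLe w 0 x) :=
  exists_continuous_order_refining_general ω u hsc hhalf
end

section
/- Let τ be a strongly convex rational polyhedral cone in ℝⁿ containing the first orthant, and let v ∈ τ generate a one-dimensional face (vertex) of τ. Assume there exists k < n with vᵢ < 0 for i ≤ k and vᵢ ≥ 0 for i > k. Then there exists ω ∈ τ^∨ such that 0 < ω·v < −ω_j v_j for all j ≤ k. -/
/-!
Since `τ` is strongly convex, `-v ∉ τ`, so Farkas' lemma (which needs finitely generated cones
to be closed) gives `ψ ∈ τ^∨` with `ψ·v > 0`. For `v_j < 0`, the vector `-e_j` does not lie in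
`τ + ℝ≥0 (-v)`: otherwise `c v - e_j ∈ τ` for some `c ≥ 0`, and the decomposition
`v = c⁻¹ (c v - e_j) + c⁻¹ e_j` contradicts either strong convexity (`c = 0`) or `v` being a
vertex. Farkas' lemma then gives `ω_j ∈ τ^∨` with `ω_j·v = 0` and `(ω_j)_j > 0`, and
`ω = ψ + t ∑ ω_j` works for large `t`: the extra term does not change `ω·v` but makes every
`-ω_j v_j` grow linearly in `t`.
-/

open Matrix

/-- The dual cone of a set in `ℝⁿ`. -/
def dualCone {n : ℕ} (S : Set (Fin n → ℝ)) : Set (Fin n → ℝ) :=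
  {v | ∀ u ∈ S, 0 ≤ v ⬝ᵥ u}

/-- Real vectors obtained from integer generating vectors (rational cones). -/
def ratGen {n k : ℕ} (v : Fin k → Fin n → ℤ) : Fin k → Fin n → ℝ :=
  fun i j => (v i j : ℝ)

open Filter

section PolyCone

variable {n k : ℕ}

lemma polyCone_eq_image (u : Fin k → Fin n → ℝ) :
    polyCone u = Fintype.linearCombination ℝ u '' Set.Ici 0 := by
  ext x
  simp only [polyCone, Set.mem_image, Set.mem_Ici, Pi.le_def, Pi.zero_apply,
    Fintype.linearCombination_apply, Set.mem_ofPred_eq, eq_comm (a := x)]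

lemma smul_mem_polyCone {u : Fin k → Fin n → ℝ} {c : ℝ} (hc : 0 ≤ c) {x : Fin n → ℝ}
    (hx : x ∈ polyCone u) : c • x ∈ polyCone u := by
  obtain ⟨lam, hlam, rfl⟩ := hx
  exact ⟨c • lam, fun i => mul_nonneg hc (hlam i), by simp [Finset.smul_sum, smul_smul]⟩

lemma add_mem_polyCone {u : Fin k → Fin n → ℝ} {x y : Fin n → ℝ} (hx : x ∈ polyCone u)
    (hy : y ∈ polyCone u) : x + y ∈ polyCone u := by
  obtain ⟨lam, hlam, rfl⟩ := hx
  obtain ⟨mu, hmu, rfl⟩ := hy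
  exact ⟨lam + mu, fun i => add_nonneg (hlam i) (hmu i),
    by simp [add_smul, Finset.sum_add_distrib]⟩

lemma zero_mem_polyCone (u : Fin k → Fin n → ℝ) : 0 ∈ polyCone u :=
  ⟨0, fun _ => le_rfl, by simp⟩

def polyPointedCone (u : Fin k → Fin n → ℝ) : PointedCone ℝ (Fin n → ℝ) where
  carrier := polyCone u
  zero_mem' := zero_mem_polyCone u
  add_mem' := add_mem_polyCone
  smul_mem' c _ hx := smul_mem_polyCone c.2 hx

lemma mem_polyCone_snoc {u : Fin k → Fin n → ℝ} {w x : Fin n → ℝ} :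
    x ∈ polyCone (Fin.snoc u w) ↔ ∃ y ∈ polyCone u, ∃ c : ℝ, 0 ≤ c ∧ x = y + c • w := by
  constructor
  · rintro ⟨lam, hlam, rfl⟩
    refine ⟨_, ⟨fun i => lam i.castSucc, fun i => hlam _, rfl⟩, lam (Fin.last k), hlam _, ?_⟩
    simp [Fin.sum_univ_castSucc]
  · rintro ⟨_, ⟨lam, hlam, rfl⟩, c, hc, rfl⟩
    refine ⟨Fin.snoc lam c, fun i => ?_, by simp [Fin.sum_univ_castSucc]⟩
    exact Fin.lastCases (by simpa using hc) (fun i => by simpa using hlam i) i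

lemma exists_nonneg_add_smul_eq_zero_of_neg {ι : Type*} [Fintype ι] {lam c : ι → ℝ}
    (hlam : 0 ≤ lam) (hc : ∃ i, c i < 0) :
    ∃ t : ℝ, ∃ i, 0 ≤ lam + t • c ∧ (lam + t • c) i = 0 := by
  obtain ⟨i₀, hi₀, hmin⟩ := Finset.exists_min_image ({i | c i < 0} : Finset ι)
    (fun i => lam i / -c i) (by simpa [Finset.Nonempty] using hc)
  simp only [Finset.mem_filter, Finset.mem_univ, true_and] at hi₀ hmin
  refine ⟨lam i₀ / -c i₀, i₀, fun i => ?_, ?_⟩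
  · rcases lt_or_ge (c i) 0 with hci | hci
    · have := (le_div_iff₀ (neg_pos.2 hci)).1 (hmin i hci)
      simp only [Pi.zero_apply, Pi.add_apply, Pi.smul_apply, smul_eq_mul]
      linarith
    · exact add_nonneg (hlam i) (mul_nonneg (div_nonneg (hlam i₀) (neg_pos.2 hi₀).le) hci)
  · simp only [Pi.add_apply, Pi.smul_apply, smul_eq_mul]
    field_simp [hi₀.ne]
    ring

lemma exists_nonneg_add_smul_eq_zero {ι : Type*} [Fintype ι] {lam c : ι → ℝ}
    (hlam : 0 ≤ lam) (hc : c ≠ 0) : ∃ t : ℝ, ∃ i, 0 ≤ lam + t • c ∧ (lam + t • c) i = 0 := by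
  by_cases hneg : ∃ i, c i < 0
  · exact exists_nonneg_add_smul_eq_zero_of_neg hlam hneg
  · have : ∃ i, (-c) i < 0 := by
      obtain ⟨i, hi⟩ := Function.ne_iff.1 hc
      exact ⟨i, by push Not at hneg; simpa using lt_of_le_of_ne (hneg i) (Ne.symm hi)⟩
    obtain ⟨t, i, h⟩ := exists_nonneg_add_smul_eq_zero_of_neg hlam this
    exact ⟨-t, i, by simpa using h⟩

lemma polyCone_comp_succAbove_subset (u : Fin (k + 1) → Fin n → ℝ) (i : Fin (k + 1)) :
    polyCone (u ∘ i.succAbove) ⊆ polyCone u := by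
  rintro _ ⟨lam, hlam, rfl⟩
  refine ⟨Fin.insertNth i 0 lam, fun j => ?_, ?_⟩
  · exact Fin.succAboveCases i (by simp) (fun j => by simpa using hlam j) j
  · simp [Fin.sum_univ_succAbove _ i]

lemma polyCone_eq_iUnion_of_not_linearIndependent {u : Fin (k + 1) → Fin n → ℝ}
    (hu : ¬ LinearIndependent ℝ u) :
    polyCone u = ⋃ i : Fin (k + 1), polyCone (u ∘ i.succAbove) := by
  refine subset_antisymm ?_ (Set.iUnion_subset (polyCone_comp_succAbove_subset u))
  obtain ⟨g, hg, i, hi⟩ := Fintype.not_linearIndependent_iff.1 hu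
  rw [polyCone_eq_image]
  rintro _ ⟨lam, hlam, rfl⟩
  obtain ⟨t, i₀, hmu, hmu₀⟩ :=
    exists_nonneg_add_smul_eq_zero hlam (Function.ne_iff.2 ⟨i, hi⟩)
  have hsum : Fintype.linearCombination ℝ u (lam + t • g) = Fintype.linearCombination ℝ u lam := by
    rw [map_add, map_smul, Fintype.linearCombination_apply ℝ u g, hg, smul_zero, add_zero]
  refine Set.mem_iUnion.2 ⟨i₀, fun j => (lam + t • g) (i₀.succAbove j), fun j => hmu _, ?_⟩
  rw [← hsum, Fintype.linearCombination_apply, Fin.sum_univ_succAbove _ i₀, hmu₀, zero_smul,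
    zero_add]
  rfl

lemma isClosed_polyCone_of_linearIndependent {u : Fin k → Fin n → ℝ} (hu : LinearIndependent ℝ u) :
    IsClosed (polyCone u) := by
  rw [polyCone_eq_image]
  exact (LinearMap.isClosedEmbedding_of_injective (LinearMap.ker_eq_bot.2
    hu.fintypeLinearCombination_injective)).isClosedMap _ isClosed_Ici

/-- Conic Carathéodory: `polyCone u` is a finite union of cones on linearly independent
subfamilies of `u`. -/
lemma isClosed_polyCone (u : Fin k → Fin n → ℝ) : IsClosed (polyCone u) := by
  induction k with
  | zero => exact isClosed_polyCone_of_linearIndependent linearIndependent_empty_type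
  | succ k ih =>
    by_cases hu : LinearIndependent ℝ u
    · exact isClosed_polyCone_of_linearIndependent hu
    · rw [polyCone_eq_iUnion_of_not_linearIndependent hu]
      exact isClosed_iUnion_of_finite fun i => ih _

/-- Farkas' lemma for finitely generated cones. -/
lemma exists_mem_dualCone_dotProduct_neg {u : Fin k → Fin n → ℝ} {b : Fin n → ℝ}
    (hb : b ∉ polyCone u) : ∃ ω ∈ dualCone (polyCone u), ω ⬝ᵥ b < 0 := by
  obtain ⟨f, hf, hfb⟩ := ProperCone.hyperplane_separation_point
    ⟨polyPointedCone u, isClosed_polyCone u⟩ hb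
  have hfω : ∀ x, f x = (fun j => f (Pi.single j 1)) ⬝ᵥ x := fun x => by
    conv_lhs => rw [pi_eq_sum_univ' x]
    simp [dotProduct, mul_comm]
  exact ⟨_, fun x hx => (hfω x) ▸ hf x hx, hfω b ▸ hfb⟩

end PolyCone

section Vertex

variable {n k : ℕ}

def IsStronglyConvex (τ : Set (Fin n → ℝ)) : Prop :=
  ∀ x ∈ τ, -x ∈ τ → x = 0

def IsVertex (τ : Set (Fin n → ℝ)) (v : Fin n → ℝ) : Prop :=
  ∀ x ∈ τ, ∀ y ∈ τ, x + y = v →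
    (∃ c : ℝ, 0 ≤ c ∧ x = c • v) ∨ (∃ c : ℝ, 0 ≤ c ∧ y = c • v)

lemma nonneg_of_mem_dualCone {S : Set (Fin n → ℝ)} (horth : Set.Ici 0 ⊆ S) {ω : Fin n → ℝ}
    (hω : ω ∈ dualCone S) : 0 ≤ ω := fun j => by
  simpa using hω _ (horth (Pi.single_nonneg.2 zero_le_one : (0 : Fin n → ℝ) ≤ Pi.single j 1))

lemma add_mem_dualCone {S : Set (Fin n → ℝ)} {ω ω' : Fin n → ℝ} (hω : ω ∈ dualCone S)
    (hω' : ω' ∈ dualCone S) : ω + ω' ∈ dualCone S := fun x hx => by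
  rw [add_dotProduct]; exact add_nonneg (hω x hx) (hω' x hx)

lemma smul_mem_dualCone {S : Set (Fin n → ℝ)} {ω : Fin n → ℝ} {t : ℝ} (ht : 0 ≤ t)
    (hω : ω ∈ dualCone S) : t • ω ∈ dualCone S := fun x hx => by
  rw [smul_dotProduct]; exact mul_nonneg ht (hω x hx)

lemma sum_mem_dualCone {ι : Type*} [Fintype ι] {S : Set (Fin n → ℝ)} {ω : ι → Fin n → ℝ}
    (hω : ∀ i, ω i ∈ dualCone S) : ∑ i, ω i ∈ dualCone S := fun x hx => by
  rw [sum_dotProduct]; exact Finset.sum_nonneg fun i _ => hω i x hx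

lemma smul_sub_single_notMem_polyCone {u : Fin k → Fin n → ℝ} (hsc : IsStronglyConvex (polyCone u))
    (horth : Set.Ici 0 ⊆ polyCone u) {v : Fin n → ℝ} (hnv : -v ∉ polyCone u)
    (hvert : IsVertex (polyCone u) v) {j : Fin n} (hvj : v j < 0) {c : ℝ} (hc : 0 ≤ c) :
    c • v - Pi.single j 1 ∉ polyCone u := by
  intro hmem
  set e : Fin n → ℝ := Pi.single j 1
  have he : e ∈ polyCone u := horth (Pi.single_nonneg.2 zero_le_one)
  rcases hc.eq_or_lt with rfl | hc
  · simpa [e] using congrFun (hsc e he (by simpa using hmem)) j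
  have hsplit : c⁻¹ • (c • v - e) + c⁻¹ • e = v := by
    simp [smul_sub, smul_smul, inv_mul_cancel₀ hc.ne']
  rcases hvert _ (smul_mem_polyCone (inv_nonneg.2 hc.le) hmem) _
    (smul_mem_polyCone (inv_nonneg.2 hc.le) he) hsplit with ⟨a, -, hx⟩ | ⟨a, ha, hy⟩
  · rw [smul_sub, smul_smul, inv_mul_cancel₀ hc.ne', one_smul] at hx
    -- `(1 - a) v = c⁻¹ e_j` with `v_j < 0` makes `-v` a nonnegative multiple of `e_j`
    have hv_eq : (1 - a) • v = c⁻¹ • e := by linear_combination (norm := module) hx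
    have key : ∀ i, (1 - a) * v i = c⁻¹ * e i := fun i => by simpa using congrFun hv_eq i
    have ha : 1 - a < 0 := by
      have := key j
      simp only [e, Pi.single_eq_same, mul_one] at this
      nlinarith [inv_pos.2 hc]
    refine hnv (horth fun i => ?_)
    have := key i
    have : 0 ≤ e i := (Pi.single_nonneg.2 zero_le_one : (0 : Fin n → ℝ) ≤ e) i
    simp only [Pi.zero_apply, Pi.neg_apply]
    nlinarith [inv_pos.2 hc]
  · have := congrFun hy j
    simp only [e, Pi.smul_apply, Pi.single_eq_same, smul_eq_mul, mul_one] at this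
    nlinarith [inv_pos.2 hc]

lemma exists_mem_dualCone_dotProduct_eq_zero_apply_pos {u : Fin k → Fin n → ℝ}
    (hsc : IsStronglyConvex (polyCone u)) (horth : Set.Ici 0 ⊆ polyCone u) {v : Fin n → ℝ}
    (hv : v ∈ polyCone u) (hnv : -v ∉ polyCone u) (hvert : IsVertex (polyCone u) v) {j : Fin n}
    (hvj : v j < 0) : ∃ ω ∈ dualCone (polyCone u), ω ⬝ᵥ v = 0 ∧ 0 < ω j := by
  have hnotin : -Pi.single j 1 ∉ polyCone (Fin.snoc u (-v)) := by
    rw [mem_polyCone_snoc]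
    rintro ⟨y, hy, c, hc, hyc⟩
    refine smul_sub_single_notMem_polyCone hsc horth hnv hvert hvj hc ?_
    convert hy using 1
    linear_combination (norm := module) hyc
  obtain ⟨ω, hω, hωe⟩ := exists_mem_dualCone_dotProduct_neg hnotin
  have hω' : ω ∈ dualCone (polyCone u) := fun x hx =>
    hω x (mem_polyCone_snoc.2 ⟨x, hx, 0, le_rfl, by simp⟩)
  have hωv : 0 ≤ ω ⬝ᵥ -v :=
    hω _ (mem_polyCone_snoc.2 ⟨0, zero_mem_polyCone u, 1, zero_le_one, by simp⟩)
  exact ⟨ω, hω', le_antisymm (by simpa using hωv) (hω' v hv), by simpa using hωe⟩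

lemma exists_mem_dualCone_dotProduct_eq_zero_forall_apply_pos {S : Set (Fin n → ℝ)}
    (horth : Set.Ici 0 ⊆ S) {v : Fin n → ℝ} (p : Fin n → Prop)
    (h : ∀ j, p j → ∃ ω ∈ dualCone S, ω ⬝ᵥ v = 0 ∧ 0 < ω j) :
    ∃ ω ∈ dualCone S, ω ⬝ᵥ v = 0 ∧ ∀ j, p j → 0 < ω j := by
  have h' : ∀ j, ∃ ω ∈ dualCone S, ω ⬝ᵥ v = 0 ∧ (p j → 0 < ω j) := fun j => by
    by_cases hj : p j
    · obtain ⟨ω, hω, hωv, hωj⟩ := h j hj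
      exact ⟨ω, hω, hωv, fun _ => hωj⟩
    · exact ⟨0, fun _ _ => by simp, by simp, fun h => absurd h hj⟩
  choose W hW hWv hWpos using h'
  refine ⟨∑ j, W j, sum_mem_dualCone hW, by simp [sum_dotProduct, hWv], fun j hj => ?_⟩
  calc 0 < W j j := hWpos j hj
    _ ≤ ∑ i, W i j :=
      Finset.single_le_sum (fun i _ => nonneg_of_mem_dualCone horth (hW i) j) (Finset.mem_univ j)
    _ = (∑ i, W i) j := (Finset.sum_apply ..).symm

end Vertex

lemma eventually_dotProduct_lt_neg_mul {n : ℕ} {ψ W v : Fin n → ℝ} (hWv : W ⬝ᵥ v = 0) {j : Fin n}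
    (hWj : 0 < W j) (hvj : v j < 0) :
    ∀ᶠ t : ℝ in atTop, (ψ + t • W) ⬝ᵥ v < -((ψ + t • W) j * v j) := by
  have hslope : 0 < W j * -v j := mul_pos hWj (neg_pos.2 hvj)
  filter_upwards [eventually_gt_atTop ((ψ ⬝ᵥ v + ψ j * v j) / (W j * -v j))] with t ht
  rw [div_lt_iff₀ hslope] at ht
  simp only [add_dotProduct, smul_dotProduct, hWv, Pi.add_apply, Pi.smul_apply, smul_eq_mul]
  linarith

theorem exists_omega_vertex_inequalities_general {n k : ℕ} (gens : Fin k → Fin n → ℤ)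
    (hsc : ∀ x ∈ polyCone (ratGen gens), -x ∈ polyCone (ratGen gens) → x = 0)
    (horth : ∀ x : Fin n → ℝ, (∀ i, 0 ≤ x i) → x ∈ polyCone (ratGen gens))
    (v : Fin n → ℝ) (hv : v ∈ polyCone (ratGen gens)) (hvne : v ≠ 0)
    (hvert : ∀ x ∈ polyCone (ratGen gens), ∀ y ∈ polyCone (ratGen gens), x + y = v →
      (∃ c : ℝ, 0 ≤ c ∧ x = c • v) ∨ (∃ c : ℝ, 0 ≤ c ∧ y = c • v))
    (m : ℕ)
    (hneg : ∀ i : Fin n, (i : ℕ) < m → v i < 0) :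
    ∃ ω ∈ dualCone (polyCone (ratGen gens)),
      0 < ω ⬝ᵥ v ∧ ∀ j : Fin n, (j : ℕ) < m → ω ⬝ᵥ v < -(ω j * v j) := by
  have hnv : -v ∉ polyCone (ratGen gens) := fun h => hvne (hsc v hv h)
  obtain ⟨ψ, hψ, hψv⟩ := exists_mem_dualCone_dotProduct_neg hnv
  rw [dotProduct_neg, neg_lt_zero] at hψv
  obtain ⟨W, hW, hWv, hWpos⟩ := exists_mem_dualCone_dotProduct_eq_zero_forall_apply_pos horth
    (fun j => (j : ℕ) < m) fun j hj =>
      exists_mem_dualCone_dotProduct_eq_zero_apply_pos hsc horth hv hnv hvert (hneg j hj)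
  obtain ⟨t, ht, hlt⟩ := ((eventually_ge_atTop 0).and <| eventually_all.2 fun j =>
    eventually_imp_distrib_left.2 fun hj =>
      eventually_dotProduct_lt_neg_mul hWv (hWpos j hj) (hneg j hj)).exists
  refine ⟨ψ + t • W, add_mem_dualCone hψ (smul_mem_dualCone ht hW), ?_, hlt⟩
  rwa [add_dotProduct, smul_dotProduct, hWv, smul_zero, add_zero]

/-- Let `τ` be a strongly convex rational polyhedral cone containing the first orthant and
let `v` generate a one-dimensional face (vertex) of `τ`, with `v i < 0` for `i < m` and
`v i ≥ 0` for `i ≥ m` (`m < n`). Then there exists `ω ∈ τ^∨` with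
`0 < ω·v < -ω_j v_j` for all `j < m`. -/
theorem exists_omega_vertex_inequalities {n k : ℕ} (gens : Fin k → Fin n → ℤ)
    (hsc : ∀ x ∈ polyCone (ratGen gens), -x ∈ polyCone (ratGen gens) → x = 0)
    (horth : ∀ x : Fin n → ℝ, (∀ i, 0 ≤ x i) → x ∈ polyCone (ratGen gens))
    (v : Fin n → ℝ) (hv : v ∈ polyCone (ratGen gens)) (hvne : v ≠ 0)
    (hvert : ∀ x ∈ polyCone (ratGen gens), ∀ y ∈ polyCone (ratGen gens), x + y = v →
      (∃ c : ℝ, 0 ≤ c ∧ x = c • v) ∨ (∃ c : ℝ, 0 ≤ c ∧ y = c • v))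
    (m : ℕ) (hm : m < n)
    (hneg : ∀ i : Fin n, (i : ℕ) < m → v i < 0)
    (hpos : ∀ i : Fin n, m ≤ (i : ℕ) → 0 ≤ v i) :
    ∃ ω ∈ dualCone (polyCone (ratGen gens)),
      0 < ω ⬝ᵥ v ∧ ∀ j : Fin n, (j : ℕ) < m → ω ⬝ᵥ v < -(ω j * v j) :=
  exists_omega_vertex_inequalities_general gens hsc horth v hv hvne hvert m hneg
end
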